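/- arXiv:2112.11079 — 3 statements merged into one kernel-verified Lean document; each statement's English description precedes it below -/
import Mathlib

section
/- Let X ~ N(μ, σ²) and Z ~ N(0, σ²) be independent Gaussian random variables, and let τ > 0. Then f(X) = X + τZ and g(X) = X - (1/τ)Z are independent, with f(X) ~ N(μ, (1+τ²)σ²) and g(X) ~ N(μ, (1+τ⁻²)σ²). -/
open MeasureTheory ProbabilityTheory
open scoped NNReal ENNReal
open Real

lemma gf_prod_withDensity (m₁ m₂ : ℝ) (v₁ v₂ : ℝ≥0) (h₁ : v₁ ≠ 0) (h₂ : v₂ ≠ 0) :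
    (gaussianReal m₁ v₁).prod (gaussianReal m₂ v₂)
      = (volume : Measure (ℝ × ℝ)).withDensity
          (fun p => gaussianPDF m₁ v₁ p.1 * gaussianPDF m₂ v₂ p.2) := by
  refine Measure.prod_eq fun s t hs ht => ?_
  rw [withDensity_apply _ (hs.prod ht),
    show (volume : Measure (ℝ × ℝ)) = (volume : Measure ℝ).prod volume from rfl,
    ← Measure.prod_restrict,
    lintegral_prod_mul ((measurable_gaussianPDF m₁ v₁).aemeasurable)
      ((measurable_gaussianPDF m₂ v₂).aemeasurable),
    gaussianReal_apply m₁ h₁ s, gaussianReal_apply m₂ h₂ t]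

lemma gf_map_equiv_withDensity {α β : Type*} [MeasurableSpace α] [MeasurableSpace β]
    (e : α ≃ᵐ β) (μ : Measure α) {f : α → ℝ≥0∞} (hf : Measurable f) :
    Measure.map e (μ.withDensity f) = (Measure.map e μ).withDensity (f ∘ e.symm) := by
  ext s hs
  rw [MeasurableEquiv.map_apply, withDensity_apply _ (e.measurable hs), withDensity_apply _ hs,
    setLIntegral_map hs (hf.comp e.symm.measurable) e.measurable]
  simp

noncomputable def gfHomeo (τ : ℝ) (hτ : τ ≠ 0) : (ℝ × ℝ) ≃ₜ (ℝ × ℝ) where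
  toFun p := (p.1 + τ * p.2, p.1 - p.2 / τ)
  invFun q := ((q.1 + τ ^ 2 * q.2) / (1 + τ ^ 2), τ * (q.1 - q.2) / (1 + τ ^ 2))
  left_inv p := by
    have h1 : 1 + τ ^ 2 ≠ 0 := by positivity
    ext <;> field_simp <;> ring
  right_inv q := by
    have h1 : 1 + τ ^ 2 ≠ 0 := by positivity
    ext <;> field_simp <;> ring
  continuous_toFun := by fun_prop
  continuous_invFun := by fun_prop

noncomputable def gfLin (τ : ℝ) : (ℝ × ℝ) →ₗ[ℝ] (ℝ × ℝ) :=
  Matrix.toLin (Module.Basis.finTwoProd ℝ) (Module.Basis.finTwoProd ℝ) !![1, τ; 1, -τ⁻¹]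

lemma gfLin_apply (τ : ℝ) (hτ : τ ≠ 0) :
    ⇑(gfLin τ) = fun p : ℝ × ℝ => (p.1 + τ * p.2, p.1 - p.2 / τ) := by
  funext p
  rw [gfLin, Matrix.toLin_finTwoProd_apply]
  simp [div_eq_mul_inv]; ring

lemma gfLin_det (τ : ℝ) (hτ : 0 < τ) : LinearMap.det (gfLin τ) = -(τ + τ⁻¹) := by
  rw [gfLin, LinearMap.det_toLin, Matrix.det_fin_two_of]
  ring

lemma gf_map_volume (τ : ℝ) (hτ : 0 < τ) :
    Measure.map (fun p : ℝ × ℝ => (p.1 + τ * p.2, p.1 - p.2 / τ)) (volume : Measure (ℝ × ℝ))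
      = ENNReal.ofReal ((τ + τ⁻¹)⁻¹) • (volume : Measure (ℝ × ℝ)) := by
  have hd : LinearMap.det (gfLin τ) ≠ 0 := by
    rw [gfLin_det τ hτ]
    have : 0 < τ + τ⁻¹ := by positivity
    simp only [neg_ne_zero]; exact this.ne'
  have := Measure.map_linearMap_addHaar_eq_smul_addHaar (μ := (volume : Measure (ℝ × ℝ))) hd
  rw [gfLin_apply τ hτ.ne', gfLin_det τ hτ] at this
  rw [this]
  congr 1
  rw [abs_inv, abs_neg, abs_of_pos (by positivity)]

lemma gf_pdf_eq (m : ℝ) (v : ℝ≥0) (hv : v ≠ 0) (τ : ℝ) (hτ : 0 < τ) (u w : ℝ) :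
    (τ + τ⁻¹)⁻¹ * (gaussianPDFReal m v ((u + τ ^ 2 * w) / (1 + τ ^ 2))
        * gaussianPDFReal 0 v (τ * (u - w) / (1 + τ ^ 2)))
    = gaussianPDFReal m ((1 + τ ^ 2).toNNReal * v) u
        * gaussianPDFReal m ((1 + τ⁻¹ ^ 2).toNNReal * v) w := by
  have hv' : (0:ℝ) < (v : ℝ) := by positivity
  have hτ' : τ ≠ 0 := hτ.ne'
  have h1 : (0:ℝ) < 1 + τ ^ 2 := by positivity
  have h2 : (0:ℝ) < 1 + τ⁻¹ ^ 2 := by positivity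
  have hpi : (0:ℝ) < π := pi_pos
  simp only [gaussianPDFReal, NNReal.coe_mul, Real.coe_toNNReal _ h1.le,
    Real.coe_toNNReal _ h2.le, sub_zero]
  have hsq : √(2 * π * ((1 + τ ^ 2) * v)) * √(2 * π * ((1 + τ⁻¹ ^ 2) * v))
      = (τ + τ⁻¹) * (2 * π * v) := by
    rw [← Real.sqrt_mul (by positivity)]
    rw [show (2 * π * ((1 + τ ^ 2) * (v:ℝ))) * (2 * π * ((1 + τ⁻¹ ^ 2) * v))
        = ((τ + τ⁻¹) * (2 * π * v)) ^ 2 by field_simp; ring]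
    exact Real.sqrt_sq (by positivity)
  have hc : (τ + τ⁻¹)⁻¹ * ((√(2 * π * v))⁻¹ * (√(2 * π * v))⁻¹)
      = (√(2 * π * ((1 + τ ^ 2) * v)))⁻¹ * (√(2 * π * ((1 + τ⁻¹ ^ 2) * v)))⁻¹ := by
    have hss : √(2 * π * (v:ℝ)) * √(2 * π * v) = 2 * π * v :=
      Real.mul_self_sqrt (by positivity)
    rw [show (τ + τ⁻¹)⁻¹ * ((√(2 * π * (v:ℝ)))⁻¹ * (√(2 * π * v))⁻¹)
        = ((τ + τ⁻¹) * (√(2 * π * (v:ℝ)) * √(2 * π * v)))⁻¹ by rw [mul_inv, mul_inv],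
      hss, ← hsq, mul_inv]
  have he : (-((u + τ ^ 2 * w) / (1 + τ ^ 2) - m) ^ 2 / (2 * v))
      + (-(τ * (u - w) / (1 + τ ^ 2)) ^ 2 / (2 * v))
      = (-(u - m) ^ 2 / (2 * ((1 + τ ^ 2) * v)))
      + (-(w - m) ^ 2 / (2 * ((1 + τ⁻¹ ^ 2) * v))) := by
    field_simp
    ring
  calc (τ + τ⁻¹)⁻¹ * ((√(2 * π * v))⁻¹ * rexp (-((u + τ ^ 2 * w) / (1 + τ ^ 2) - m) ^ 2 / (2 * v))
        * ((√(2 * π * v))⁻¹ * rexp (-(τ * (u - w) / (1 + τ ^ 2)) ^ 2 / (2 * v))))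
      = ((τ + τ⁻¹)⁻¹ * ((√(2 * π * v))⁻¹ * (√(2 * π * v))⁻¹))
        * (rexp (-((u + τ ^ 2 * w) / (1 + τ ^ 2) - m) ^ 2 / (2 * v))
          * rexp (-(τ * (u - w) / (1 + τ ^ 2)) ^ 2 / (2 * v))) := by ring
    _ = ((√(2 * π * ((1 + τ ^ 2) * v)))⁻¹ * (√(2 * π * ((1 + τ⁻¹ ^ 2) * v)))⁻¹)
        * (rexp (-(u - m) ^ 2 / (2 * ((1 + τ ^ 2) * v)))
          * rexp (-(w - m) ^ 2 / (2 * ((1 + τ⁻¹ ^ 2) * v)))) := by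
        rw [hc, ← Real.exp_add, ← Real.exp_add, he]
    _ = _ := by ring

lemma gf_key (m : ℝ) (v : ℝ≥0) (τ : ℝ) (hτ : 0 < τ) :
    Measure.map (fun p : ℝ × ℝ => (p.1 + τ * p.2, p.1 - p.2 / τ))
        ((gaussianReal m v).prod (gaussianReal 0 v))
      = (gaussianReal m ((1 + τ ^ 2).toNNReal * v)).prod
          (gaussianReal m ((1 + τ⁻¹ ^ 2).toNNReal * v)) := by
  have hTmeas : Measurable (fun p : ℝ × ℝ => (p.1 + τ * p.2, p.1 - p.2 / τ)) := by fun_prop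
  by_cases hv : v = 0
  · subst hv
    simp only [mul_zero, gaussianReal_zero_var, Measure.dirac_prod_dirac,
      Measure.map_dirac' hTmeas, mul_zero, zero_div, add_zero, sub_zero]
  · have hv1 : (1 + τ ^ 2).toNNReal * v ≠ 0 :=
      mul_ne_zero (Real.toNNReal_pos.mpr (by positivity)).ne' hv
    have hv2 : (1 + τ⁻¹ ^ 2).toNNReal * v ≠ 0 :=
      mul_ne_zero (Real.toNNReal_pos.mpr (by positivity)).ne' hv
    rw [gf_prod_withDensity m 0 v v hv hv, gf_prod_withDensity _ _ _ _ hv1 hv2]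
    have hDmeas : Measurable (fun p : ℝ × ℝ => gaussianPDF m v p.1 * gaussianPDF 0 v p.2) :=
      ((measurable_gaussianPDF m v).comp measurable_fst).mul
        ((measurable_gaussianPDF 0 v).comp measurable_snd)
    have hco : (fun p : ℝ × ℝ => (p.1 + τ * p.2, p.1 - p.2 / τ))
        = ⇑(gfHomeo τ hτ.ne').toMeasurableEquiv := rfl
    rw [hco, gf_map_equiv_withDensity _ _ hDmeas, ← hco, gf_map_volume τ hτ,
      withDensity_smul_measure, ← withDensity_smul' _ _ ENNReal.ofReal_ne_top]
    congr 1
    funext p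
    have hsymm : (gfHomeo τ hτ.ne').toMeasurableEquiv.symm p
        = ((p.1 + τ ^ 2 * p.2) / (1 + τ ^ 2), τ * (p.1 - p.2) / (1 + τ ^ 2)) := rfl
    simp only [Pi.smul_apply, Function.comp_apply, hsymm, smul_eq_mul, gaussianPDF]
    rw [← ENNReal.ofReal_mul (gaussianPDFReal_nonneg _ _ _),
      ← ENNReal.ofReal_mul (by positivity), gf_pdf_eq m v hv τ hτ p.1 p.2]
    exact ENNReal.ofReal_mul (gaussianPDFReal_nonneg _ _ _)

/-- **Gaussian data fission (P1).** If `X ~ N(m, v)` and `Z ~ N(0, v)` are independent and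
`τ > 0`, then `f(X) = X + τZ` and `g(X) = X - Z/τ` are independent, with
`f(X) ~ N(m, (1+τ²)v)` and `g(X) ~ N(m, (1+τ⁻²)v)`. -/
theorem gaussian_fission_P1
    {Ω : Type*} [MeasureSpace Ω] [IsProbabilityMeasure (ℙ : Measure Ω)]
    (X Z : Ω → ℝ) (hXm : Measurable X) (hZm : Measurable Z)
    (m : ℝ) (v : ℝ≥0) (τ : ℝ) (hτ : 0 < τ)
    (hX : Measure.map X ℙ = gaussianReal m v)
    (hZ : Measure.map Z ℙ = gaussianReal 0 v)
    (hindep : IndepFun X Z) :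
    IndepFun (fun ω => X ω + τ * Z ω) (fun ω => X ω - Z ω / τ) ∧
    Measure.map (fun ω => X ω + τ * Z ω) ℙ
      = gaussianReal m ((1 + τ ^ 2).toNNReal * v) ∧
    Measure.map (fun ω => X ω - Z ω / τ) ℙ
      = gaussianReal m ((1 + τ⁻¹ ^ 2).toNNReal * v) := by
  have hUm : Measurable (fun ω => X ω + τ * Z ω) := hXm.add (measurable_const.mul hZm)
  have hVm : Measurable (fun ω => X ω - Z ω / τ) := hXm.sub (hZm.div_const τ)
  have hpair : Measurable (fun ω => (X ω, Z ω)) := hXm.prodMk hZm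
  have hTmeas : Measurable (fun p : ℝ × ℝ => (p.1 + τ * p.2, p.1 - p.2 / τ)) := by fun_prop
  have hjoint : Measure.map (fun ω => (X ω, Z ω)) ℙ
      = (gaussianReal m v).prod (gaussianReal 0 v) := by
    rw [← hX, ← hZ]
    exact (indepFun_iff_map_prod_eq_prod_map_map hXm.aemeasurable hZm.aemeasurable).mp hindep
  have hUV : Measure.map (fun ω => (X ω + τ * Z ω, X ω - Z ω / τ)) ℙ
      = (gaussianReal m ((1 + τ ^ 2).toNNReal * v)).prod
          (gaussianReal m ((1 + τ⁻¹ ^ 2).toNNReal * v)) := by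
    rw [show (fun ω => (X ω + τ * Z ω, X ω - Z ω / τ))
        = (fun p : ℝ × ℝ => (p.1 + τ * p.2, p.1 - p.2 / τ)) ∘ (fun ω => (X ω, Z ω)) from rfl,
      ← Measure.map_map hTmeas hpair, hjoint, gf_key m v τ hτ]
  have hU : Measure.map (fun ω => X ω + τ * Z ω) ℙ
      = gaussianReal m ((1 + τ ^ 2).toNNReal * v) := by
    rw [show (fun ω => X ω + τ * Z ω)
        = Prod.fst ∘ (fun ω => (X ω + τ * Z ω, X ω - Z ω / τ)) from rfl,
      ← Measure.map_map measurable_fst (hUm.prodMk hVm), hUV, Measure.map_fst_prod,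
      measure_univ, one_smul]
  have hV : Measure.map (fun ω => X ω - Z ω / τ) ℙ
      = gaussianReal m ((1 + τ⁻¹ ^ 2).toNNReal * v) := by
    rw [show (fun ω => X ω - Z ω / τ)
        = Prod.snd ∘ (fun ω => (X ω + τ * Z ω, X ω - Z ω / τ)) from rfl,
      ← Measure.map_map measurable_snd (hUm.prodMk hVm), hUV, Measure.map_snd_prod,
      measure_univ, one_smul]
  refine ⟨?_, hU, hV⟩
  rw [indepFun_iff_map_prod_eq_prod_map_map hUm.aemeasurable hVm.aemeasurable, hU, hV]
  exact hUV
end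

section
/- If X ~ NegativeBinomial(r, θ) and, conditionally on X, Z ~ Binomial(X, p), then marginally Z ~ NegativeBinomial(r, θ/(θ + p − pθ)), and the conditional distribution of X − Z given Z = z is NegativeBinomial(r + z, θ + p − pθ). -/
/-- The NegativeBinomial(r, θ) probability mass function (number of failures before the `r`-th
success with success probability `θ`): `P(X = k) = C(k+r-1, k) θ^r (1-θ)^k`. -/
noncomputable def nbPMF (r : ℕ) (θ : ℝ) (k : ℕ) : ℝ :=
  ((k + r - 1).choose k : ℝ) * θ ^ r * (1 - θ) ^ k

/-- The Binomial(n, p) probability mass function. -/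
noncomputable def binPMF (n : ℕ) (p : ℝ) (k : ℕ) : ℝ :=
  (n.choose k : ℝ) * p ^ k * (1 - p) ^ (n - k)

lemma choose_fission (r z j : ℕ) (hr : 1 ≤ r) :
    (z + j + r - 1).choose (z + j) * (z + j).choose z
      = (z + r - 1).choose z * (z + j + r - 1).choose j := by
  have h1 : (z + j).choose z = (z + j).choose j := by
    rw [← Nat.choose_symm (by omega : j ≤ z + j)]; congr 1; omega
  rw [h1, Nat.choose_mul (by omega : j ≤ z + j)]
  have h2 : z + j + r - 1 - j = z + r - 1 := by omega
  have h3 : z + j - j = z := by omega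
  rw [h2, h3, mul_comm]

lemma nb_part2 (r : ℕ) (hr : 1 ≤ r) (θ p : ℝ) (hθ : θ ∈ Set.Ioo (0 : ℝ) 1)
    (hp : p ∈ Set.Ioo (0 : ℝ) 1) (z j : ℕ) :
    nbPMF r θ (z + j) * binPMF (z + j) p z
      = nbPMF r (θ / (θ + p - p * θ)) z * nbPMF (r + z) (θ + p - p * θ) j := by
  obtain ⟨hθ0, hθ1⟩ := hθ
  obtain ⟨hp0, hp1⟩ := hp
  obtain ⟨s, hs⟩ : ∃ s : ℝ, s = θ + p - p * θ := ⟨_, rfl⟩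
  rw [← hs]
  have hs0 : 0 < s := by rw [hs]; nlinarith
  have hsne : s ≠ 0 := ne_of_gt hs0
  have h1s : (1 : ℝ) - s = (1 - p) * (1 - θ) := by rw [hs]; ring
  have hθs : 1 - θ / s = p * (1 - θ) / s := by
    rw [eq_div_iff hsne, sub_mul, div_mul_cancel₀ _ hsne, hs]; ring
  clear hs
  simp only [nbPMF, binPMF]
  have hzz : z + j - z = j := by omega
  have hjz : (j + (r + z) - 1) = z + j + r - 1 := by omega
  have hc : ((z + j + r - 1).choose (z + j) : ℝ) * (z + j).choose z
      = (z + r - 1).choose z * (z + j + r - 1).choose j := by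
    exact_mod_cast congrArg (Nat.cast : ℕ → ℝ) (choose_fission r z j hr)
  rw [hzz, hjz, hθs, h1s, div_pow, div_pow, mul_pow, mul_pow, pow_add s r z]
  field_simp
  linear_combination ((1 - θ) ^ z * (1 - θ) ^ j) * hc

lemma nb_hasSum_one (m : ℕ) (hm : 1 ≤ m) (s : ℝ) (hs : s ∈ Set.Ioo (0 : ℝ) 1) :
    HasSum (fun j => nbPMF m s j) 1 := by
  obtain ⟨hs0, hs1⟩ := hs
  have hsne : s ≠ 0 := ne_of_gt hs0
  have hnorm : ‖(1 : ℝ) - s‖ < 1 := by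
    rw [Real.norm_eq_abs, abs_lt]; constructor <;> linarith
  have h := (hasSum_choose_mul_geometric_of_norm_lt_one (𝕜 := ℝ) (m - 1) hnorm).mul_left (s ^ m)
  have hm1 : m - 1 + 1 = m := by omega
  have h1 : (1 : ℝ) - (1 - s) = s := by ring
  rw [h1, hm1, mul_one_div, div_self (pow_ne_zero m hsne)] at h
  convert h using 2 with j
  case e'_3 => rfl
  have hcs : (j + m - 1).choose j = (j + (m - 1)).choose (m - 1) := by
    have e1 : j + m - 1 = j + (m - 1) := by omega
    rw [e1, ← Nat.choose_symm (by omega : j ≤ j + (m - 1))]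
    congr 1; omega
  simp only [nbPMF, hcs]; ring

/-- **Negative binomial fission (P2).** If `X ~ NB(r, θ)` and, conditionally on `X`,
`Z ~ Binomial(X, p)`, then marginally `Z ~ NB(r, θ/(θ + p - pθ))`, and the conditional
distribution of `X - Z` given `Z = z` is `NB(r + z, θ + p - pθ)`, the latter stated via
`P(X = z + j, Z = z) = P(Z = z) · NB(r+z, θ+p-pθ)(j)`. -/
theorem negative_binomial_fission
    (r : ℕ) (hr : 1 ≤ r) (θ p : ℝ) (hθ : θ ∈ Set.Ioo (0 : ℝ) 1) (hp : p ∈ Set.Ioo (0 : ℝ) 1) :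
    (∀ k : ℕ,
      (∑' x : ℕ, nbPMF r θ x * binPMF x p k) = nbPMF r (θ / (θ + p - p * θ)) k) ∧
    (∀ z j : ℕ,
      nbPMF r θ (z + j) * binPMF (z + j) p z
        = nbPMF r (θ / (θ + p - p * θ)) z * nbPMF (r + z) (θ + p - p * θ) j) := by
  have hsIoo : (θ + p - p * θ) ∈ Set.Ioo (0 : ℝ) 1 := by
    obtain ⟨hθ0, hθ1⟩ := hθ; obtain ⟨hp0, hp1⟩ := hp
    constructor <;> nlinarith
  refine ⟨fun k => ?_, fun z j => nb_part2 r hr θ p hθ hp z j⟩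
  have hinj : Function.Injective (fun j : ℕ => k + j) := fun a b h => by
    simpa using h
  have hzero : ∀ x ∉ Set.range (fun j : ℕ => k + j),
      nbPMF r θ x * binPMF x p k = 0 := by
    intro x hx
    have hxk : x < k := by
      by_contra h
      exact hx ⟨x - k, by simp; omega⟩
    simp [binPMF, Nat.choose_eq_zero_of_lt hxk]
  have hsum : HasSum ((fun x => nbPMF r θ x * binPMF x p k) ∘ (fun j : ℕ => k + j))
      (nbPMF r (θ / (θ + p - p * θ)) k) := by
    have h1 := (nb_hasSum_one (r + k) (by omega) _ hsIoo).mul_left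
      (nbPMF r (θ / (θ + p - p * θ)) k)
    rw [mul_one] at h1
    convert h1 using 2 with j
    case e'_3 => rfl
    exact nb_part2 r hr θ p hθ hp k j
  exact ((hinj.hasSum_iff hzero).mp hsum).tsum_eq
end

section
/- Let Y be an integer-valued random variable with CDF F, let F(y−) denote the left limit, and let U ~ Uniform(0,1) be independent of Y. Then Y' = F(Y)·U + (1−U)·F(Y−) is uniformly distributed on (0,1). -/
open MeasureTheory ProbabilityTheory Set

/-- **Randomized probability integral transform.** Let `Y` be an integer-valued random
variable with CDF `F`, `F(y-)` its left limit, and `U ~ Uniform(0,1)` independent of `Y`.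
Then `Y' = F(Y)·U + (1-U)·F(Y-)` is uniformly distributed on `(0,1)`. -/
theorem randomized_pit
    {Ω : Type*} [MeasureSpace Ω] [IsProbabilityMeasure (ℙ : Measure Ω)]
    (Y : Ω → ℤ) (U : Ω → ℝ) (hYm : Measurable Y) (hUm : Measurable U)
    (hU : Measure.map U ℙ = volume.restrict (Set.Ioo (0 : ℝ) 1))
    (hindep : IndepFun Y U) :
    Measure.map
        (fun ω =>
          (ℙ {ω' | Y ω' ≤ Y ω}).toReal * U ω
            + (1 - U ω) * (ℙ {ω' | Y ω' < Y ω}).toReal) ℙ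
      = volume.restrict (Set.Ioo (0 : ℝ) 1) := by
  classical
  -- notation
  set β : ℤ → ℝ := fun k => (ℙ {ω' | Y ω' ≤ k}).toReal with hβdef
  set α : ℤ → ℝ := fun k => (ℙ {ω' | Y ω' < k}).toReal with hαdef
  set g : Ω → ℝ := fun ω => β (Y ω) * U ω + (1 - U ω) * α (Y ω) with hgdef
  -- basic measurability
  have hβm : Measurable β := measurable_of_countable _
  have hαm : Measurable α := measurable_of_countable _
  have hgm : Measurable g :=
    ((hβm.comp hYm).mul hUm).add ((measurable_const.sub hUm).mul (hαm.comp hYm))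
  have hsetle : ∀ k : ℤ, MeasurableSet {ω' | Y ω' ≤ k} := fun k =>
    hYm (measurableSet_Iic : MeasurableSet (Iic k))
  have hsetlt : ∀ k : ℤ, MeasurableSet {ω' | Y ω' < k} := fun k =>
    hYm (measurableSet_Iio : MeasurableSet (Iio k))
  -- basic inequalities
  have hne_top_le : ∀ k : ℤ, ℙ {ω' | Y ω' ≤ k} ≠ ⊤ := fun k => measure_ne_top _ _
  have hne_top_lt : ∀ k : ℤ, ℙ {ω' | Y ω' < k} ≠ ⊤ := fun k => measure_ne_top _ _
  have hα0 : ∀ k, 0 ≤ α k := fun k => ENNReal.toReal_nonneg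
  have hαβ : ∀ k, α k ≤ β k := fun k =>
    ENNReal.toReal_mono (hne_top_le k) (measure_mono fun ω' h => le_of_lt (show Y ω' < k from h))
  have hβ1 : ∀ k, β k ≤ 1 := fun k => by
    have := prob_le_one (μ := (ℙ : Measure Ω)) (s := {ω' | Y ω' ≤ k})
    simpa [hβdef] using ENNReal.toReal_mono ENNReal.one_ne_top this
  have hβmono : Monotone β := by
    intro j k hjk
    exact ENNReal.toReal_mono (hne_top_le k)
      (measure_mono fun ω' h => le_trans h (by exact_mod_cast hjk))
  have hstep : ∀ k : ℤ, α (k + 1) = β k := by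
    intro k
    have : {ω' | Y ω' < k + 1} = {ω' | Y ω' ≤ k} := by
      ext ω'; exact Int.lt_add_one_iff
    simp [hαdef, hβdef, this]
  have hαβstep : ∀ k : ℤ, α k = β (k - 1) := by
    intro k; have := hstep (k - 1); simpa using this
  -- the mass at k
  have hsplit : ∀ k : ℤ, ℙ {ω' | Y ω' ≤ k} = ℙ {ω' | Y ω' < k} + ℙ (Y ⁻¹' {k}) := by
    intro k
    have hset : {ω' | Y ω' ≤ k} = {ω' | Y ω' < k} ∪ Y ⁻¹' {k} := by
      ext ω'
      simp only [mem_setOf_eq, mem_union, mem_preimage, mem_singleton_iff]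
      exact ⟨fun h => h.lt_or_eq, fun h => h.elim le_of_lt le_of_eq⟩
    have hdisj : Disjoint {ω' | Y ω' < k} (Y ⁻¹' {k}) := by
      rw [Set.disjoint_left]
      intro ω' h1 h2
      simp only [mem_preimage, mem_singleton_iff] at h2
      simp only [mem_setOf_eq, h2] at h1
      exact lt_irrefl _ h1
    rw [hset, measure_union hdisj (hYm (MeasurableSet.singleton k))]
  have hmass : ∀ k : ℤ, ℙ (Y ⁻¹' {k}) = ENNReal.ofReal (β k - α k) := by
    intro k
    have h1 := hsplit k
    have h2 : β k = α k + (ℙ (Y ⁻¹' {k})).toReal := by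
      rw [hβdef]
      simp only
      rw [h1, ENNReal.toReal_add (hne_top_lt k) (measure_ne_top _ _)]
    have h3 : (ℙ (Y ⁻¹' {k})).toReal = β k - α k := by linarith
    rw [← h3, ENNReal.ofReal_toReal (measure_ne_top _ _)]
  -- sup and inf of the CDF
  have hsup : (⨆ k : ℤ, ℙ {ω' | Y ω' ≤ k}) = 1 := by
    have hmono : Monotone fun k : ℤ => {ω' | Y ω' ≤ k} := fun j k hjk ω' h =>
      le_trans h (by exact_mod_cast hjk)
    have := hmono.measure_iUnion (μ := (ℙ : Measure Ω))
    rw [← this]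
    have : (⋃ k : ℤ, {ω' | Y ω' ≤ k}) = univ := by
      ext ω'; simp only [mem_iUnion, mem_setOf_eq, mem_univ, iff_true]
      exact ⟨Y ω', le_rfl⟩
    rw [this, measure_univ]
  have hinf : (⨅ k : ℤ, ℙ {ω' | Y ω' < k}) = 0 := by
    have hmono : Monotone fun k : ℤ => {ω' | Y ω' < k} := fun j k hjk ω' h =>
      lt_of_lt_of_le h (by exact_mod_cast hjk)
    have := hmono.measure_iInter (μ := (ℙ : Measure Ω))
      (fun k => (hsetlt k).nullMeasurableSet) ⟨0, measure_ne_top _ _⟩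
    rw [← this]
    have : (⋂ k : ℤ, {ω' | Y ω' < k}) = ∅ := by
      ext ω'; simp only [mem_iInter, mem_setOf_eq, mem_empty_iff_false, iff_false, not_forall,
        not_lt]
      exact ⟨Y ω', le_rfl⟩
    rw [this, measure_empty]
  -- covering (0,1) by the intervals (α k, β k]
  have hcover : Ioo (0 : ℝ) 1 ⊆ ⋃ k : ℤ, Ioc (α k) (β k) := by
    intro x hx
    obtain ⟨hx0, hx1⟩ := hx
    -- there is some k with x ≤ β k
    have hub : ∃ k : ℤ, x ≤ β k := by
      have h1 : ENNReal.ofReal x < ⨆ k : ℤ, ℙ {ω' | Y ω' ≤ k} := by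
        rw [hsup]; exact ENNReal.ofReal_lt_one.2 hx1
      obtain ⟨k, hk⟩ := lt_iSup_iff.1 h1
      refine ⟨k, ?_⟩
      have := ENNReal.toReal_mono (hne_top_le k) hk.le
      rwa [ENNReal.toReal_ofReal hx0.le] at this
    -- there is some k with β k < x
    have hlb : ∃ k : ℤ, β k < x := by
      have h1 : (⨅ k : ℤ, ℙ {ω' | Y ω' < k}) < ENNReal.ofReal x := by
        rw [hinf]; exact ENNReal.ofReal_pos.2 hx0
      obtain ⟨k, hk⟩ := iInf_lt_iff.1 h1
      refine ⟨k - 1, ?_⟩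
      rw [← hαβstep k]
      have := (ENNReal.toReal_lt_toReal (hne_top_lt k) ENNReal.ofReal_ne_top).2 hk
      rwa [ENNReal.toReal_ofReal hx0.le] at this
    -- take the least k with x ≤ β k
    obtain ⟨k0, hk0⟩ := hlb
    have hbdd : ∃ b : ℤ, ∀ z : ℤ, x ≤ β z → b ≤ z := by
      refine ⟨k0 + 1, fun z hz => ?_⟩
      by_contra h
      push_neg at h
      have : β z ≤ β k0 := hβmono (by omega)
      linarith
    obtain ⟨k, hk, hkmin⟩ := Int.exists_least_of_bdd hbdd hub
    refine mem_iUnion.2 ⟨k, ?_, hk⟩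
    rw [hαβstep k]
    by_contra h
    push_neg at h
    have := hkmin (k - 1) h
    omega
  have hsub01 : ∀ k : ℤ, Ioc (α k) (β k) ⊆ Ioc (0 : ℝ) 1 := fun k x hx =>
    ⟨lt_of_le_of_lt (hα0 k) hx.1, le_trans hx.2 (hβ1 k)⟩
  -- pairwise disjointness
  have hdisjIoc : Pairwise (Function.onFun Disjoint fun k : ℤ => Ioc (α k) (β k)) := by
    intro j k hjk
    rcases lt_or_gt_of_ne hjk with h | h
    · have : β j ≤ α k := by
        rw [hαβstep k]; exact hβmono (by omega)
      exact Set.Ioc_disjoint_Ioc.2 (le_trans (min_le_left _ _) (le_max_of_le_right this))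
    · have : β k ≤ α j := by
        rw [hαβstep j]; exact hβmono (by omega)
      exact Set.Ioc_disjoint_Ioc.2 (le_trans (min_le_right _ _) (le_max_of_le_left this))
  -- main argument: equality of CDFs
  have hprob : IsProbabilityMeasure (Measure.map g ℙ) :=
    Measure.isProbabilityMeasure_map hgm.aemeasurable
  have hmain : Measure.map g ℙ = volume.restrict (Set.Ioo (0 : ℝ) 1) := by
    refine Measure.ext_of_Iic _ _ fun t => ?_
    rw [Measure.map_apply hgm measurableSet_Iic,
      Measure.restrict_apply measurableSet_Iic]
    -- the slice sets in the u-variable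
    set S : ℤ → Set ℝ := fun k => {u : ℝ | β k * u + (1 - u) * α k ≤ t} with hSdef
    have hSm : ∀ k, MeasurableSet (S k) :=
      fun k => measurableSet_le (by fun_prop) measurable_const
    -- decompose over the value of Y
    have hdecomp : g ⁻¹' Iic t = ⋃ k : ℤ, Y ⁻¹' {k} ∩ U ⁻¹' S k := by
      ext ω
      simp only [mem_preimage, mem_Iic, mem_iUnion, mem_inter_iff, mem_singleton_iff,
        hSdef, mem_setOf_eq]
      constructor
      · intro h; exact ⟨Y ω, rfl, h⟩
      · rintro ⟨k, hk, h⟩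
        show β (Y ω) * U ω + (1 - U ω) * α (Y ω) ≤ t
        rw [hk]; exact h
    have hdisjΩ : Pairwise (Function.onFun Disjoint fun k : ℤ => Y ⁻¹' {k} ∩ U ⁻¹' S k) := by
      intro j k hjk
      refine Set.disjoint_left.2 fun ω h1 h2 => hjk ?_
      have := h1.1; have := h2.1
      simp only [mem_preimage, mem_singleton_iff] at *
      omega
    rw [hdecomp, measure_iUnion hdisjΩ fun k =>
      (hYm (MeasurableSet.singleton k)).inter (hUm (hSm k))]
    -- use independence and the distribution of U
    have hterm : ∀ k : ℤ, ℙ (Y ⁻¹' {k} ∩ U ⁻¹' S k)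
        = ENNReal.ofReal (β k - α k) * volume (S k ∩ Ioo 0 1) := by
      intro k
      rw [hindep.measure_inter_preimage_eq_mul _ _ (MeasurableSet.singleton k) (hSm k),
        hmass k]
      congr 1
      rw [← Measure.map_apply hUm (hSm k), hU, Measure.restrict_apply (hSm k)]
    -- compute each term
    have hcalc : ∀ k : ℤ, ENNReal.ofReal (β k - α k) * volume (S k ∩ Ioo 0 1)
        = volume (Iic t ∩ Ioc (α k) (β k)) := by
      intro k
      have hIic : Iic t ∩ Ioc (α k) (β k) = Ioc (α k) (min (β k) t) := by
        rw [Set.inter_comm, Set.Ioc_inter_Iic]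
      rw [hIic, Real.volume_Ioc]
      rcases eq_or_lt_of_le (hαβ k) with heq | hlt
      · -- no mass at k
        have h1 : β k - α k = 0 := by rw [heq]; ring
        have h2 : min (β k) t - α k ≤ 0 := by
          have h3 : min (β k) t ≤ β k := min_le_left _ _
          linarith
        rw [h1, ENNReal.ofReal_zero, zero_mul, ENNReal.ofReal_eq_zero.2 h2]
      · -- positive mass at k
        have hp : (0 : ℝ) < β k - α k := by linarith
        have hSk : S k = Iic ((t - α k) / (β k - α k)) := by
          ext u
          simp only [hSdef, mem_setOf_eq, mem_Iic, le_div_iff₀ hp]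
          constructor <;> intro h <;> nlinarith
        have hvol : volume (S k ∩ Ioo 0 1)
            = ENNReal.ofReal (min 1 ((t - α k) / (β k - α k)) - 0) := by
          apply le_antisymm
          · calc volume (S k ∩ Ioo 0 1)
                ≤ volume (Ioc (0 : ℝ) (min 1 ((t - α k) / (β k - α k)))) := by
                  refine measure_mono fun u hu => ?_
                  rw [hSk] at hu
                  obtain ⟨huc, hu0, hu1⟩ := hu
                  exact ⟨hu0, le_min hu1.le huc⟩
              _ = ENNReal.ofReal (min 1 ((t - α k) / (β k - α k)) - 0) := Real.volume_Ioc
          · calc ENNReal.ofReal (min 1 ((t - α k) / (β k - α k)) - 0)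
                = volume (Ioo (0 : ℝ) (min 1 ((t - α k) / (β k - α k)))) :=
                  (Real.volume_Ioo).symm
              _ ≤ volume (S k ∩ Ioo 0 1) := by
                  refine measure_mono fun u hu => ?_
                  obtain ⟨hu0, huc⟩ := hu
                  rw [lt_min_iff] at huc
                  rw [hSk]
                  exact ⟨huc.2.le, hu0, huc.1⟩
        rw [hvol, ← ENNReal.ofReal_mul hp.le]
        congr 1
        rw [sub_zero, mul_min_of_nonneg _ _ hp.le, mul_one, mul_div_cancel₀ _ hp.ne']
        exact min_sub_sub_right (β k) t (α k)
    simp_rw [hterm, hcalc]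
    -- sum the interval volumes
    rw [← measure_iUnion
      (hdisjIoc.mono fun {j k} h => Disjoint.mono inter_subset_right inter_subset_right h)
      (fun k => measurableSet_Iic.inter measurableSet_Ioc)]
    -- compare the union with (0,1)
    apply le_antisymm
    · -- ≤ : the union is inside Ioc 0 1, which differs from Ioo 0 1 by the null set {1}
      have hsubset : (⋃ k : ℤ, Iic t ∩ Ioc (α k) (β k)) ⊆ (Iic t ∩ Ioo (0 : ℝ) 1) ∪ {1} := by
        intro x hx
        obtain ⟨k, hk⟩ := mem_iUnion.1 hx
        have h01 := hsub01 k hk.2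
        rcases eq_or_lt_of_le h01.2 with h | h
        · exact Or.inr h
        · exact Or.inl ⟨hk.1, h01.1, h⟩
      calc volume (⋃ k : ℤ, Iic t ∩ Ioc (α k) (β k))
          ≤ volume ((Iic t ∩ Ioo (0 : ℝ) 1) ∪ {1}) := measure_mono hsubset
        _ ≤ volume (Iic t ∩ Ioo (0 : ℝ) 1) + volume ({1} : Set ℝ) := measure_union_le _ _
        _ = volume (Iic t ∩ Ioo 0 1) := by rw [Real.volume_singleton, add_zero]
    · -- ≥ : (0,1) is covered by the intervals
      refine measure_mono fun x hx => ?_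
      obtain ⟨hxt, hx01⟩ := hx
      obtain ⟨k, hk⟩ := mem_iUnion.1 (hcover hx01)
      exact mem_iUnion.2 ⟨k, hxt, hk⟩
  exact hmain
end
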